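/- arXiv:2304.04116 — 2 statements merged into one kernel-verified Lean document; each statement's English description precedes it below -/
import Mathlib

section
/- Fix m ∈ M with ‖m‖₁ > 0, and let t_m = sup_{s' ∈ S} D_m(s') / 2. If c ∈ M minimizes cross-entropy, i.e., CE_m(c) = inf_{c' ∈ M} CE_m(c'), then the segmentation obtained by thresholding c at t_m minimizes soft-Dice: SD_m(I_{[t_m,1]} ∘ c) = inf_{c' ∈ M} SD_m(c'). -/
open MeasureTheory Real Set
open scoped ENNReal

noncomputable section

/-- The unit cube `Ω = [0,1]^n` in `ℝ^n`. -/
def cube (n : ℕ) : Set (EuclideanSpace ℝ (Fin n)) :=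
  WithLp.ofLp ⁻¹' (Set.univ.pi fun _ => Set.Icc (0:ℝ) 1)

/-- Lebesgue measure restricted to the unit cube. -/
def lam (n : ℕ) : Measure (EuclideanSpace ℝ (Fin n)) := volume.restrict (cube n)

/-- `S`: measurable functions `Ω → {0,1}` (as real-valued functions on `ℝ^n`). -/
def IsSeg {n : ℕ} (s : EuclideanSpace ℝ (Fin n) → ℝ) : Prop :=
  Measurable s ∧ ∀ ω, s ω = 0 ∨ s ω = 1

/-- `M`: measurable functions `Ω → [0,1]`. -/
def IsSoft {n : ℕ} (m : EuclideanSpace ℝ (Fin n) → ℝ) : Prop :=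
  Measurable m ∧ ∀ ω, m ω ∈ Set.Icc (0:ℝ) 1

/-- `‖f‖₁ = ∫_Ω |f| dλ`. -/
def l1 {n : ℕ} (f : EuclideanSpace ℝ (Fin n) → ℝ) : ℝ := ∫ ω, |f ω| ∂(lam n)

/-- Accuracy `A_m(s)`. -/
def accur {n : ℕ} (m s : EuclideanSpace ℝ (Fin n) → ℝ) : ℝ :=
  ∫ ω, (s ω * m ω + (1 - s ω) * (1 - m ω)) ∂(lam n)

/-- Dice `D_m(s)`. -/
def dice {n : ℕ} (m s : EuclideanSpace ℝ (Fin n) → ℝ) : ℝ :=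
  2 * (∫ ω, s ω * m ω ∂(lam n)) / (l1 s + l1 m)

/-- soft-Dice `SD_m(c)`. -/
def sdice {n : ℕ} (m c : EuclideanSpace ℝ (Fin n) → ℝ) : ℝ :=
  1 - 2 * (∫ ω, c ω * m ω ∂(lam n)) / (l1 c + l1 m)

/-- pointwise cross-entropy term `-(m log c)` in `[0,∞]`, with `0·log 0 = 0`, `log 0 = -∞`. -/
def ceTerm (m c : ℝ) : ℝ≥0∞ :=
  if m = 0 then 0 else if c = 0 then ⊤ else ENNReal.ofReal (-(m * Real.log c))

/-- cross-entropy `CE_m(c) ∈ [0,∞]`. -/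
def crossEnt {n : ℕ} (m c : EuclideanSpace ℝ (Fin n) → ℝ) : ℝ≥0∞ :=
  ∫⁻ ω, (ceTerm (m ω) (c ω) + ceTerm (1 - m ω) (1 - c ω)) ∂(lam n)

/-- the thresholded segmentation `I_{[t,1]} ∘ c`. -/
def thresh {n : ℕ} (t : ℝ) (c : EuclideanSpace ℝ (Fin n) → ℝ) :
    EuclideanSpace ℝ (Fin n) → ℝ := fun ω => if t ≤ c ω then 1 else 0

/-- `sup_{s' ∈ S} D_m(s')`. -/
def supDice {n : ℕ} (m : EuclideanSpace ℝ (Fin n) → ℝ) : ℝ :=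
  ⨆ s' : {s' : EuclideanSpace ℝ (Fin n) → ℝ // IsSeg s'}, dice m s'.1

/-- the centered isotropic Gaussian density `p_{σ²}` on `ℝ^n`. -/
def pdens (n : ℕ) (σ2 : ℝ) (x : EuclideanSpace ℝ (Fin n)) : ℝ :=
  (2 * π * σ2) ^ (-(n:ℝ)/2) * Real.exp (-‖x‖^2 / (2 * σ2))

lemma cube_compact (n : ℕ) : IsCompact (cube n) :=
  (PiLp.continuousLinearEquiv 2 ℝ (fun _ : Fin n => ℝ)).toHomeomorph.isCompact_preimage.mpr
    (isCompact_univ_pi fun _ => isCompact_Icc)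

instance (n : ℕ) : IsFiniteMeasure (lam n) := by
  constructor
  rw [lam, Measure.restrict_apply_univ]
  exact (cube_compact n).measure_lt_top

lemma integrable_of_bound {n : ℕ} (f : EuclideanSpace ℝ (Fin n) → ℝ) (hf : Measurable f)
    (B : ℝ) (h : ∀ ω, |f ω| ≤ B) : Integrable f (lam n) :=
  (integrable_const B).mono' hf.aestronglyMeasurable (Filter.Eventually.of_forall h)

lemma l1_eq_integral {n : ℕ} (f : EuclideanSpace ℝ (Fin n) → ℝ) (hf : ∀ ω, 0 ≤ f ω) :
    l1 f = ∫ ω, f ω ∂(lam n) := by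
  unfold l1; congr 1; ext ω; exact abs_of_nonneg (hf ω)

lemma l1_nonneg {n : ℕ} (f : EuclideanSpace ℝ (Fin n) → ℝ) : 0 ≤ l1 f :=
  integral_nonneg fun ω => abs_nonneg _

lemma l1_le_vol {n : ℕ} (f : EuclideanSpace ℝ (Fin n) → ℝ) (h : ∀ ω, |f ω| ≤ 1) :
    l1 f ≤ (lam n Set.univ).toReal := by
  calc l1 f ≤ ∫ _ω, (1:ℝ) ∂(lam n) :=
        integral_mono_of_nonneg (Filter.Eventually.of_forall fun ω => abs_nonneg _)
          (integrable_const 1) (Filter.Eventually.of_forall h)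
      _ = (lam n Set.univ).toReal := by simp; rfl

lemma seg_soft {n : ℕ} {s : EuclideanSpace ℝ (Fin n) → ℝ} (hs : IsSeg s) : IsSoft s := by
  refine ⟨hs.1, fun ω => ?_⟩
  rcases hs.2 ω with h | h <;> simp [h]

-- abs bound for soft functions
lemma soft_abs {n : ℕ} {f : EuclideanSpace ℝ (Fin n) → ℝ} (hf : IsSoft f) (ω) : |f ω| ≤ 1 := by
  have := hf.2 ω; rw [abs_le]; constructor <;> [linarith [this.1]; exact this.2]

lemma soft_mul_integrable {n : ℕ} {f g : EuclideanSpace ℝ (Fin n) → ℝ}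
    (hf : IsSoft f) (hg : IsSoft g) : Integrable (fun ω => f ω * g ω) (lam n) := by
  apply integrable_of_bound _ (hf.1.mul hg.1) 1
  intro ω
  rw [Pi.mul_apply, abs_mul]
  exact mul_le_one₀ (soft_abs hf ω) (abs_nonneg _) (soft_abs hg ω)

lemma soft_integrable {n : ℕ} {f : EuclideanSpace ℝ (Fin n) → ℝ} (hf : IsSoft f) :
    Integrable f (lam n) := integrable_of_bound _ hf.1 1 (soft_abs hf)

section dicepart
variable {n : ℕ} {m : EuclideanSpace ℝ (Fin n) → ℝ}

lemma intmul_le_l1_left (hm : IsSoft m) {f : EuclideanSpace ℝ (Fin n) → ℝ} (hf : IsSoft f) :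
    (∫ ω, f ω * m ω ∂(lam n)) ≤ l1 f := by
  rw [l1_eq_integral f fun ω => (hf.2 ω).1]
  apply integral_mono (soft_mul_integrable hf hm) (soft_integrable hf)
  intro ω
  calc f ω * m ω ≤ f ω * 1 := mul_le_mul_of_nonneg_left (hm.2 ω).2 (hf.2 ω).1
    _ = f ω := mul_one _

lemma intmul_le_l1_right (hm : IsSoft m) {f : EuclideanSpace ℝ (Fin n) → ℝ} (hf : IsSoft f) :
    (∫ ω, f ω * m ω ∂(lam n)) ≤ l1 m := by
  rw [l1_eq_integral m fun ω => (hm.2 ω).1]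
  apply integral_mono (soft_mul_integrable hf hm) (soft_integrable hm)
  intro ω
  calc f ω * m ω ≤ 1 * m ω := mul_le_mul_of_nonneg_right (hf.2 ω).2 (hm.2 ω).1
    _ = m ω := one_mul _

lemma dice_le_one (hm : IsSoft m) (hm1 : 0 < l1 m) {f : EuclideanSpace ℝ (Fin n) → ℝ} (hf : IsSoft f) :
    dice m f ≤ 1 := by
  rw [dice, div_le_one (add_pos_of_nonneg_of_pos (l1_nonneg f) hm1)]
  have h1 := intmul_le_l1_left hm hf
  have h2 := intmul_le_l1_right hm hf
  linarith

lemma bdd_dice (hm : IsSoft m) (hm1 : 0 < l1 m) : BddAbove (Set.range fun s' : {s' : EuclideanSpace ℝ (Fin n) → ℝ // IsSeg s'} => dice m s'.1) := by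
  refine ⟨1, ?_⟩
  rintro x ⟨s, rfl⟩
  exact dice_le_one hm hm1 (seg_soft s.2)

lemma dice_le_supDice (hm : IsSoft m) (hm1 : 0 < l1 m) {s : EuclideanSpace ℝ (Fin n) → ℝ} (hs : IsSeg s) :
    dice m s ≤ supDice m := le_ciSup (bdd_dice hm hm1) ⟨s, hs⟩

lemma one_seg : IsSeg (fun _ : EuclideanSpace ℝ (Fin n) => (1:ℝ)) :=
  ⟨measurable_const, fun _ => Or.inr rfl⟩

instance : Nonempty {s' : EuclideanSpace ℝ (Fin n) → ℝ // IsSeg s'} := ⟨⟨fun _ => 1, one_seg⟩⟩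

instance : Nonempty {c' : EuclideanSpace ℝ (Fin n) → ℝ // IsSoft c'} :=
  ⟨⟨fun _ => 1, seg_soft one_seg⟩⟩

lemma supDice_pos (hm : IsSoft m) (hm1 : 0 < l1 m) : 0 < supDice m := by
  have h := dice_le_supDice hm hm1 (one_seg (n := n))
  have : 0 < dice m (fun _ => (1:ℝ)) := by
    rw [dice]
    have : (∫ ω, (fun _ : EuclideanSpace ℝ (Fin n) => (1:ℝ)) ω * m ω ∂(lam n)) = l1 m := by
      rw [l1_eq_integral m fun ω => (hm.2 ω).1]
      simp
    rw [this]
    have h0 := l1_nonneg (n := n) (fun _ => (1:ℝ))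
    positivity
  linarith


lemma thresh_seg (t : ℝ) {c : EuclideanSpace ℝ (Fin n) → ℝ} (hc : Measurable c) :
    IsSeg (thresh t c) := by
  constructor
  · exact Measurable.ite (measurableSet_le measurable_const hc) measurable_const measurable_const
  · intro ω
    by_cases h : t ≤ c ω <;> simp [thresh, h]

lemma int_soft_sub (hm : IsSoft m) {f : EuclideanSpace ℝ (Fin n) → ℝ} (hf : IsSoft f) (t : ℝ) :
    (∫ ω, f ω * (m ω - t) ∂(lam n)) = (∫ ω, f ω * m ω ∂(lam n)) - t * l1 f := by
  have h1 : Integrable (fun ω => f ω * m ω) (lam n) := soft_mul_integrable hf hm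
  have h2 : Integrable (fun ω => t * f ω) (lam n) := (soft_integrable hf).const_mul t
  have : (fun ω => f ω * (m ω - t)) = fun ω => f ω * m ω - t * f ω := by
    ext ω; ring
  rw [this, integral_sub h1 h2, integral_const_mul, l1_eq_integral f fun ω => (hf.2 ω).1]

lemma integrable_mul_sub (hm : IsSoft m) {f : EuclideanSpace ℝ (Fin n) → ℝ} (hf : IsSoft f)
    (t : ℝ) : Integrable (fun ω => f ω * (m ω - t)) (lam n) := by
  apply integrable_of_bound _ (hf.1.mul (hm.1.sub measurable_const)) (1 + |t|)
  intro ω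
  rw [Pi.mul_apply, abs_mul]
  calc |f ω| * |m ω - t| ≤ 1 * (|m ω| + |t|) :=
        mul_le_mul (soft_abs hf ω) (abs_sub (m ω) t) (abs_nonneg _) zero_le_one
    _ ≤ 1 + |t| := by have := soft_abs hm ω; rw [one_mul]; linarith

lemma seg_key_le (hm : IsSoft m) (hm1 : 0 < l1 m) {s : EuclideanSpace ℝ (Fin n) → ℝ}
    (hs : IsSeg s) :
    (∫ ω, s ω * (m ω - supDice m / 2) ∂(lam n)) ≤ supDice m / 2 * l1 m := by
  set t := supDice m / 2 with ht
  have hd : (0:ℝ) < l1 s + l1 m := add_pos_of_nonneg_of_pos (l1_nonneg s) hm1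
  have h := dice_le_supDice hm hm1 hs
  rw [dice, div_le_iff₀ hd] at h
  rw [int_soft_sub hm (seg_soft hs) t]
  have hl : l1 s ≤ l1 s := le_refl _
  nlinarith [h]

lemma pointwise_le_star (hm : IsSoft m) {f : EuclideanSpace ℝ (Fin n) → ℝ} (hf : IsSoft f)
    (t : ℝ) (ω : EuclideanSpace ℝ (Fin n)) :
    f ω * (m ω - t) ≤ thresh t m ω * (m ω - t) := by
  by_cases h : t ≤ m ω
  · simp only [thresh, if_pos h, one_mul]
    calc f ω * (m ω - t) ≤ 1 * (m ω - t) :=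
          mul_le_mul_of_nonneg_right (hf.2 ω).2 (by linarith)
      _ = m ω - t := one_mul _
  · simp only [thresh, if_neg h, zero_mul]
    exact mul_nonpos_of_nonneg_of_nonpos (hf.2 ω).1 (by linarith [lt_of_not_ge h])

lemma soft_le_star_int (hm : IsSoft m) {f : EuclideanSpace ℝ (Fin n) → ℝ} (hf : IsSoft f)
    (t : ℝ) :
    (∫ ω, f ω * (m ω - t) ∂(lam n)) ≤ ∫ ω, thresh t m ω * (m ω - t) ∂(lam n) :=
  integral_mono (integrable_mul_sub hm hf t)
    (integrable_mul_sub hm (seg_soft (thresh_seg t hm.1)) t) (pointwise_le_star hm hf t)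

lemma star_ge (hm : IsSoft m) (hm1 : 0 < l1 m) :
    supDice m / 2 * l1 m ≤ ∫ ω, thresh (supDice m / 2) m ω * (m ω - supDice m / 2) ∂(lam n) := by
  set t := supDice m / 2 with ht
  set V := (lam n Set.univ).toReal with hV
  have hV0 : 0 ≤ V := ENNReal.toReal_nonneg
  apply le_of_forall_pos_le_add
  intro ε hε
  set ε0 := ε / (2 * V + 1) with hε0
  have hε0pos : 0 < ε0 := div_pos hε (by linarith)
  have hlt : supDice m - ε0 < supDice m := by linarith
  have hlt2 : supDice m - ε0
      < ⨆ s' : {s' : EuclideanSpace ℝ (Fin n) → ℝ // IsSeg s'}, dice m s'.1 := hlt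
  obtain ⟨s, hs⟩ := exists_lt_of_lt_ciSup hlt2
  have hseg := s.2
  have hd : (0:ℝ) < l1 s.1 + l1 m := add_pos_of_nonneg_of_pos (l1_nonneg s.1) hm1
  rw [dice, lt_div_iff₀ hd] at hs
  have hI : (∫ ω, s.1 ω * (m ω - t) ∂(lam n))
      = (∫ ω, s.1 ω * m ω ∂(lam n)) - t * l1 s.1 := int_soft_sub hm (seg_soft hseg) t
  have hls : l1 s.1 ≤ V := l1_le_vol s.1 (soft_abs (seg_soft hseg))
  have hlm : l1 m ≤ V := l1_le_vol m (soft_abs hm)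
  have hεV : ε0 * (l1 s.1 + l1 m) ≤ ε := by
    have : ε0 * (2 * V + 1) = ε := div_mul_cancel₀ ε (by linarith)
    nlinarith
  have key : t * l1 m - ε ≤ ∫ ω, s.1 ω * (m ω - t) ∂(lam n) := by
    rw [hI]; nlinarith
  have := soft_le_star_int hm (seg_soft hseg) t
  linarith

lemma star_eq (hm : IsSoft m) (hm1 : 0 < l1 m) :
    (∫ ω, thresh (supDice m / 2) m ω * (m ω - supDice m / 2) ∂(lam n))
      = supDice m / 2 * l1 m :=
  le_antisymm (seg_key_le hm hm1 (thresh_seg _ hm.1)) (star_ge hm hm1)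

lemma sdice_ge (hm : IsSoft m) (hm1 : 0 < l1 m) {f : EuclideanSpace ℝ (Fin n) → ℝ}
    (hf : IsSoft f) : 1 - supDice m ≤ sdice m f := by
  set t := supDice m / 2 with ht
  have hd : (0:ℝ) < l1 f + l1 m := add_pos_of_nonneg_of_pos (l1_nonneg f) hm1
  have h1 : (∫ ω, f ω * (m ω - t) ∂(lam n)) ≤ t * l1 m :=
    (soft_le_star_int hm hf t).trans (le_of_eq (star_eq hm hm1))
  rw [int_soft_sub hm hf t] at h1
  rw [sdice]
  have h2 : 2 * (∫ ω, f ω * m ω ∂(lam n)) / (l1 f + l1 m) ≤ 2 * t := by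
    rw [div_le_iff₀ hd]; nlinarith
  linarith

lemma sdice_star (hm : IsSoft m) (hm1 : 0 < l1 m) :
    sdice m (thresh (supDice m / 2) m) = 1 - supDice m := by
  set t := supDice m / 2 with ht
  set s := thresh t m with hsdef
  have hseg : IsSeg s := thresh_seg t hm.1
  have hd : (0:ℝ) < l1 s + l1 m := add_pos_of_nonneg_of_pos (l1_nonneg s) hm1
  have h1 : (∫ ω, s ω * (m ω - t) ∂(lam n)) = t * l1 m := star_eq hm hm1
  rw [int_soft_sub hm (seg_soft hseg) t] at h1
  have hI : (∫ ω, s ω * m ω ∂(lam n)) = t * (l1 s + l1 m) := by linarith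
  rw [sdice, hI]
  field_simp
  ring

end dicepart

lemma ceTerm_of_ne (p q : ℝ) (hq : q ≠ 0) :
    ceTerm p q = ENNReal.ofReal (-(p * Real.log q)) := by
  by_cases hp : p = 0 <;> simp [ceTerm, hp, hq]

lemma ceTerm_self (p : ℝ) : ceTerm p p = ENNReal.ofReal (-(p * Real.log p)) := by
  by_cases hp : p = 0 <;> simp [ceTerm, hp]

lemma mul_log_le {a b : ℝ} (ha : 0 ≤ a) (hb : 0 < b) :
    a * (Real.log b - Real.log a) ≤ b - a := by
  rcases eq_or_lt_of_le ha with h | h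
  · simp [← h]; linarith
  · have hd : 0 < b / a := div_pos hb h
    have := Real.log_le_sub_one_of_pos hd
    rw [Real.log_div (ne_of_gt hb) (ne_of_gt h)] at this
    have h2 : a * (Real.log b - Real.log a) ≤ a * (b / a - 1) :=
      mul_le_mul_of_nonneg_left this ha
    calc a * (Real.log b - Real.log a) ≤ a * (b / a - 1) := h2
      _ = b - a := by field_simp
lemma mul_log_lt {a b : ℝ} (ha : 0 < a) (hb : 0 < b) (hne : b ≠ a) :
    a * (Real.log b - Real.log a) < b - a := by
  have hd : 0 < b / a := div_pos hb ha
  have hd1 : b / a ≠ 1 := by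
    intro h; exact hne (by field_simp at h; linarith)
  have := Real.log_lt_sub_one_of_pos hd hd1
  rw [Real.log_div (ne_of_gt hb) (ne_of_gt ha)] at this
  have h2 : a * (Real.log b - Real.log a) < a * (b / a - 1) :=
    mul_lt_mul_of_pos_left this ha
  calc a * (Real.log b - Real.log a) < a * (b / a - 1) := h2
    _ = b - a := by field_simp

-- nonnegativity of entropy-type terms
lemma neg_mul_log_nonneg {p q : ℝ} (hp : 0 ≤ p) (hq0 : 0 ≤ q) (hq1 : q ≤ 1) :
    0 ≤ -(p * Real.log q) := by
  have : Real.log q ≤ 0 := Real.log_nonpos hq0 hq1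
  nlinarith

lemma gibbs_le {p q : ℝ} (hp : p ∈ Set.Icc (0:ℝ) 1) (hq0 : 0 < q) (hq1 : q < 1) :
    -(p * Real.log p) + -((1-p) * Real.log (1-p))
      ≤ -(p * Real.log q) + -((1-p) * Real.log (1-q)) := by
  have h1 := mul_log_le hp.1 hq0
  have h2 := mul_log_le (by linarith [hp.2] : (0:ℝ) ≤ 1 - p) (by linarith : (0:ℝ) < 1 - q)
  rw [mul_sub] at h1 h2
  linarith

lemma gibbs_lt {p q : ℝ} (hp : p ∈ Set.Icc (0:ℝ) 1) (hq0 : 0 < q) (hq1 : q < 1)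
    (hne : q ≠ p) :
    -(p * Real.log p) + -((1-p) * Real.log (1-p))
      < -(p * Real.log q) + -((1-p) * Real.log (1-q)) := by
  rcases eq_or_lt_of_le hp.1 with h0 | h0
  · -- p = 0
    have hp0 : p = 0 := h0.symm
    subst hp0
    have : Real.log (1 - q) < 0 := Real.log_neg (by linarith) (by linarith)
    simp only [Real.log_zero]
    norm_num
    nlinarith
  rcases eq_or_lt_of_le hp.2 with h1 | h1
  · -- p = 1
    subst h1
    have : Real.log q < 0 := Real.log_neg hq0 hq1
    norm_num
    nlinarith
  · have hg1 := mul_log_lt h0 hq0 hne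
    have hg2 := mul_log_lt (by linarith : (0:ℝ) < 1 - p) (by linarith : (0:ℝ) < 1 - q)
      (by intro h; exact hne (by linarith))
    rw [mul_sub] at hg1 hg2
    linarith

lemma phi_self_le {p q : ℝ} (hp : p ∈ Set.Icc (0:ℝ) 1) (hq : q ∈ Set.Icc (0:ℝ) 1) :
    ceTerm p p + ceTerm (1-p) (1-p) ≤ ceTerm p q + ceTerm (1-p) (1-q) := by
  rcases eq_or_lt_of_le hq.1 with hq0 | hq0
  · -- q = 0
    have hq0' : q = 0 := hq0.symm
    subst hq0'
    by_cases hp0 : p = 0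
    · subst hp0; norm_num [ceTerm]
    · have : ceTerm p 0 = ⊤ := by simp [ceTerm, hp0]
      rw [this]; simp
  rcases eq_or_lt_of_le hq.2 with hq1 | hq1
  · -- q = 1
    subst hq1
    by_cases hp1 : p = 1
    · subst hp1; norm_num [ceTerm]
    · have h1p : (1:ℝ) - p ≠ 0 := by intro h; exact hp1 (by linarith)
      have : ceTerm (1-p) (1-1) = ⊤ := by norm_num [ceTerm, h1p]
      rw [this]; simp
  · rw [ceTerm_self, ceTerm_self, ceTerm_of_ne p q (ne_of_gt hq0),
      ceTerm_of_ne (1-p) (1-q) (by intro h; exact absurd (by linarith : q = 1) (ne_of_lt hq1))]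
    rw [← ENNReal.ofReal_add (neg_mul_log_nonneg hp.1 hp.1 hp.2)
        (neg_mul_log_nonneg (by linarith [hp.2]) (by linarith [hp.2]) (by linarith [hp.1])),
      ← ENNReal.ofReal_add (neg_mul_log_nonneg hp.1 hq.1 hq.2)
        (neg_mul_log_nonneg (by linarith [hp.2]) (by linarith) (by linarith))]
    exact ENNReal.ofReal_le_ofReal (gibbs_le hp hq0 hq1)

lemma phi_eq_self {p q : ℝ} (hp : p ∈ Set.Icc (0:ℝ) 1) (hq : q ∈ Set.Icc (0:ℝ) 1)
    (h : ceTerm p q + ceTerm (1-p) (1-q) ≤ ceTerm p p + ceTerm (1-p) (1-p)) : q = p := by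
  have hfin : ceTerm p p + ceTerm (1-p) (1-p) ≠ ⊤ := by
    rw [ceTerm_self, ceTerm_self]
    exact ENNReal.add_ne_top.mpr ⟨ENNReal.ofReal_ne_top, ENNReal.ofReal_ne_top⟩
  rcases eq_or_lt_of_le hq.1 with hq0 | hq0
  · -- q = 0
    have hq0' : q = 0 := hq0.symm
    subst hq0'
    by_cases hp0 : p = 0
    · exact hp0.symm ▸ rfl
    · exfalso
      have htop : ceTerm p 0 = ⊤ := by simp [ceTerm, hp0]
      rw [htop, top_add] at h
      exact hfin (top_le_iff.mp h)
  rcases eq_or_lt_of_le hq.2 with hq1 | hq1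
  · subst hq1
    by_cases hp1 : p = 1
    · exact hp1 ▸ rfl
    · exfalso
      have h1p : (1:ℝ) - p ≠ 0 := by intro hh; exact hp1 (by linarith)
      have htop : ceTerm (1-p) (1-1) = ⊤ := by norm_num [ceTerm, h1p]
      rw [htop, add_top] at h
      exact hfin (top_le_iff.mp h)
  · by_contra hne
    have hlt := gibbs_lt hp hq0 hq1 hne
    rw [ceTerm_self, ceTerm_self, ceTerm_of_ne p q (ne_of_gt hq0),
      ceTerm_of_ne (1-p) (1-q) (by intro hh; exact absurd (by linarith : q = 1) (ne_of_lt hq1))]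
      at h
    rw [← ENNReal.ofReal_add (neg_mul_log_nonneg hp.1 hp.1 hp.2)
        (neg_mul_log_nonneg (by linarith [hp.2]) (by linarith [hp.2]) (by linarith [hp.1])),
      ← ENNReal.ofReal_add (neg_mul_log_nonneg hp.1 hq.1 hq.2)
        (neg_mul_log_nonneg (by linarith [hp.2]) (by linarith) (by linarith))] at h
    rw [ENNReal.ofReal_le_ofReal_iff (add_nonneg (neg_mul_log_nonneg hp.1 hp.1 hp.2)
      (neg_mul_log_nonneg (by linarith [hp.2]) (by linarith [hp.2]) (by linarith [hp.1])))] at h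
    linarith

lemma ceTerm_measurable {n : ℕ} {f g : EuclideanSpace ℝ (Fin n) → ℝ}
    (hf : Measurable f) (hg : Measurable g) :
    Measurable fun ω => ceTerm (f ω) (g ω) := by
  unfold ceTerm
  apply Measurable.ite (hf (measurableSet_singleton 0)) measurable_const
  apply Measurable.ite (hg (measurableSet_singleton 0)) measurable_const
  exact ENNReal.measurable_ofReal.comp ((hf.mul (Real.measurable_log.comp hg)).neg)

lemma neg_mul_log_le_one {p : ℝ} (hp : p ∈ Set.Icc (0:ℝ) 1) : -(p * Real.log p) ≤ 1 := by
  rcases eq_or_lt_of_le hp.1 with h0 | h0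
  · simp [← h0]
  · have hinv : 0 < p⁻¹ := inv_pos.mpr h0
    have := Real.log_le_sub_one_of_pos hinv
    rw [Real.log_inv] at this
    have h2 : p * (-Real.log p) ≤ p * (p⁻¹ - 1) := mul_le_mul_of_nonneg_left this hp.1
    have h3 : p * (p⁻¹ - 1) = 1 - p := by field_simp
    nlinarith [hp.2]

lemma ceTerm_self_le_one {p : ℝ} (hp : p ∈ Set.Icc (0:ℝ) 1) : ceTerm p p ≤ 1 := by
  rw [ceTerm_self]
  exact ENNReal.ofReal_le_one.mpr (neg_mul_log_le_one hp)

lemma crossEnt_self_ne_top {n : ℕ} {m : EuclideanSpace ℝ (Fin n) → ℝ} (hm : IsSoft m) :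
    crossEnt m m ≠ ⊤ := by
  have hb : ∀ ω, ceTerm (m ω) (m ω) + ceTerm (1 - m ω) (1 - m ω) ≤ 2 := by
    intro ω
    have h1 := ceTerm_self_le_one (hm.2 ω)
    have h2 : ceTerm (1 - m ω) (1 - m ω) ≤ 1 := by
      apply ceTerm_self_le_one
      have := hm.2 ω
      constructor <;> [linarith [this.2]; linarith [this.1]]
    calc ceTerm (m ω) (m ω) + ceTerm (1 - m ω) (1 - m ω) ≤ 1 + 1 := add_le_add h1 h2
      _ = 2 := by norm_num
  have : crossEnt m m ≤ 2 * lam n Set.univ := by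
    rw [crossEnt]
    calc ∫⁻ ω, (ceTerm (m ω) (m ω) + ceTerm (1 - m ω) (1 - m ω)) ∂(lam n)
        ≤ ∫⁻ _ω, 2 ∂(lam n) := lintegral_mono hb
      _ = 2 * lam n Set.univ := by rw [lintegral_const]
  exact ne_top_of_le_ne_top (ENNReal.mul_ne_top (by norm_num) (measure_ne_top _ _)) this

lemma min_ae_eq {n : ℕ} {m c : EuclideanSpace ℝ (Fin n) → ℝ}
    (hm : IsSoft m) (hc : IsSoft c)
    (hmin : crossEnt m c
      = (⨅ c' : {c' : EuclideanSpace ℝ (Fin n) → ℝ // IsSoft c'}, crossEnt m c'.1)) :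
    c =ᵐ[lam n] m := by
  set G : EuclideanSpace ℝ (Fin n) → ℝ≥0∞ :=
    fun ω => ceTerm (m ω) (m ω) + ceTerm (1 - m ω) (1 - m ω) with hGdef
  set F : EuclideanSpace ℝ (Fin n) → ℝ≥0∞ :=
    fun ω => ceTerm (m ω) (c ω) + ceTerm (1 - m ω) (1 - c ω) with hFdef
  have hGm : Measurable G := (ceTerm_measurable hm.1 hm.1).add
    (ceTerm_measurable (measurable_const.sub hm.1) (measurable_const.sub hm.1))
  have hFm : Measurable F := (ceTerm_measurable hm.1 hc.1).add
    (ceTerm_measurable (measurable_const.sub hm.1) (measurable_const.sub hc.1))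
  have hle : ∀ ω, G ω ≤ F ω := fun ω => phi_self_le (hm.2 ω) (hc.2 ω)
  have hGfin : (∫⁻ ω, G ω ∂(lam n)) ≠ ⊤ := crossEnt_self_ne_top hm
  have hinf : crossEnt m c ≤ crossEnt m m := by
    rw [hmin]
    exact iInf_le (fun c' : {c' : EuclideanSpace ℝ (Fin n) → ℝ // IsSoft c'} =>
      crossEnt m c'.1) ⟨m, hm⟩
  have heq : (∫⁻ ω, F ω ∂(lam n)) = ∫⁻ ω, G ω ∂(lam n) :=
    le_antisymm hinf (lintegral_mono hle)
  have hsub : (∫⁻ ω, (F ω - G ω) ∂(lam n)) = 0 := by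
    rw [lintegral_sub hGm hGfin (Filter.Eventually.of_forall hle), heq, tsub_self]
  have hae := (lintegral_eq_zero_iff (hFm.sub hGm)).mp hsub
  filter_upwards [hae] with ω hω
  have hFle : F ω ≤ G ω := tsub_eq_zero_iff_le.mp hω
  exact phi_eq_self (hm.2 ω) (hc.2 ω) hFle

lemma inf_sdice {n : ℕ} {m : EuclideanSpace ℝ (Fin n) → ℝ} (hm : IsSoft m) (hm1 : 0 < l1 m) :
    (⨅ c' : {c' : EuclideanSpace ℝ (Fin n) → ℝ // IsSoft c'}, sdice m c'.1)
      = 1 - supDice m := by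
  apply le_antisymm
  · have hb : BddBelow (Set.range fun c' : {c' : EuclideanSpace ℝ (Fin n) → ℝ // IsSoft c'} =>
        sdice m c'.1) := by
      refine ⟨1 - supDice m, ?_⟩
      rintro x ⟨c', rfl⟩
      exact sdice_ge hm hm1 c'.2
    have := ciInf_le hb ⟨thresh (supDice m / 2) m, seg_soft (thresh_seg _ hm.1)⟩
    rwa [sdice_star hm hm1] at this
  · exact le_ciInf fun c' => sdice_ge hm hm1 c'.2

/-- Thresholding a cross-entropy minimizer at `t_m = sup_{s'∈S} D_m(s')/2`
minimizes soft-Dice. -/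
theorem crossEnt_min_implies_sdice_min
    (n : ℕ) (hn : 1 ≤ n)
    (m : EuclideanSpace ℝ (Fin n) → ℝ) (hm : IsSoft m) (hm1 : 0 < l1 m)
    (c : EuclideanSpace ℝ (Fin n) → ℝ) (hc : IsSoft c)
    (hmin : crossEnt m c
      = (⨅ c' : {c' : EuclideanSpace ℝ (Fin n) → ℝ // IsSoft c'}, crossEnt m c'.1)) :
    sdice m (thresh (supDice m / 2) c)
      = (⨅ c' : {c' : EuclideanSpace ℝ (Fin n) → ℝ // IsSoft c'}, sdice m c'.1) := by
  have hae : c =ᵐ[lam n] m := min_ae_eq hm hc hmin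
  set t := supDice m / 2 with ht
  have hthr : thresh t c =ᵐ[lam n] thresh t m := by
    filter_upwards [hae] with ω hω
    simp [thresh, hω]
  have h1 : (∫ ω, thresh t c ω * m ω ∂(lam n)) = ∫ ω, thresh t m ω * m ω ∂(lam n) := by
    apply integral_congr_ae
    filter_upwards [hthr] with ω hω
    rw [hω]
  have h2 : l1 (thresh t c) = l1 (thresh t m) := by
    apply integral_congr_ae
    filter_upwards [hthr] with ω hω
    rw [hω]
  rw [inf_sdice hm hm1, sdice, h1, h2, ← sdice, sdice_star hm hm1]
end
end

section
/- Let L be a random segmentation, i.e., a measurable map from a probability space to S such that (ω, outcome) ↦ L(ω) is jointly measurable, and let m ∈ M be its marginal function, m(ω) = E[L(ω)] for all ω ∈ Ω. Suppose the volume of L is almost surely constant, i.e., ‖L‖₁ = E[‖L‖₁] almost surely (equivalently Var[‖L‖₁] = 0), and suppose ‖m‖₁ > 0. Then for every fixed s ∈ S, the expected Dice with respect to the random label equals the Dice with respect to the soft label: E[D_L(s)] = D_m(s). -/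
open MeasureTheory Real Set
open scoped ENNReal

noncomputable section

/-- For a random segmentation `L` with marginal `m` and a.s. constant volume,
`E[D_L(s)] = D_m(s)`. -/
theorem expected_dice_eq_soft_dice
    (n : ℕ) (hn : 1 ≤ n)
    {Θ : Type*} [MeasurableSpace Θ] (P : Measure Θ) [IsProbabilityMeasure P]
    (L : Θ → EuclideanSpace ℝ (Fin n) → ℝ) (hL : ∀ θ, IsSeg (L θ))
    (hLmeas : Measurable fun p : Θ × EuclideanSpace ℝ (Fin n) => L p.1 p.2)
    (m : EuclideanSpace ℝ (Fin n) → ℝ) (hm : IsSoft m)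
    (hmarg : ∀ ω, m ω = ∫ θ, L θ ω ∂P)
    (hvol : ∀ᵐ θ ∂P, l1 (L θ) = ∫ θ', l1 (L θ') ∂P)
    (hm1 : 0 < l1 m)
    (s : EuclideanSpace ℝ (Fin n) → ℝ) (hs : IsSeg s) :
    (∫ θ, dice (L θ) s ∂P) = dice m s := by
  classical
  have hfin : IsFiniteMeasure (lam n) :=
    ⟨by rw [lam, Measure.restrict_apply_univ]
        exact ((PiLp.homeomorph 2 (fun _ : Fin n => ℝ)).isCompact_preimage.2
          (isCompact_univ_pi fun _ => isCompact_Icc)).measure_lt_top⟩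
  have hL01 : ∀ θ ω, L θ ω = 0 ∨ L θ ω = 1 := fun θ => (hL θ).2
  have hLnn : ∀ θ ω, 0 ≤ L θ ω := fun θ ω => by rcases hL01 θ ω with h | h <;> simp [h]
  have hLle : ∀ θ ω, L θ ω ≤ 1 := fun θ ω => by rcases hL01 θ ω with h | h <;> simp [h]
  have hs01 : ∀ ω, s ω = 0 ∨ s ω = 1 := hs.2
  have hsnn : ∀ ω, 0 ≤ s ω := fun ω => by rcases hs01 ω with h | h <;> simp [h]
  have hsle : ∀ ω, s ω ≤ 1 := fun ω => by rcases hs01 ω with h | h <;> simp [h]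
  have hintL : Integrable (fun p : Θ × EuclideanSpace ℝ (Fin n) => L p.1 p.2) (P.prod (lam n)) := by
    refine Integrable.mono' (integrable_const 1) hLmeas.aestronglyMeasurable ?_
    exact ae_of_all _ fun p => by
      rw [Real.norm_eq_abs, abs_of_nonneg (hLnn _ _)]; exact hLle _ _
  have hint : Integrable (fun p : Θ × EuclideanSpace ℝ (Fin n) => s p.2 * L p.1 p.2)
      (P.prod (lam n)) := by
    refine Integrable.mono' (integrable_const 1)
      ((hs.1.comp measurable_snd).mul hLmeas).aestronglyMeasurable ?_
    refine ae_of_all _ fun p => ?_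
    rw [Real.norm_eq_abs, abs_of_nonneg (mul_nonneg (hsnn _) (hLnn _ _))]
    exact mul_le_one₀ (hsle _) (hLnn _ _) (hLle _ _)
  have hlm : l1 m = ∫ θ', l1 (L θ') ∂P := by
    have h1 : l1 m = ∫ ω, ∫ θ, L θ ω ∂P ∂(lam n) := by
      rw [l1]
      refine integral_congr_ae (ae_of_all _ fun ω => ?_)
      show |m ω| = ∫ θ, L θ ω ∂P
      rw [abs_of_nonneg (hm.2 ω).1, hmarg ω]
    have h2 : (∫ θ', l1 (L θ') ∂P) = ∫ θ, ∫ ω, L θ ω ∂(lam n) ∂P := by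
      refine integral_congr_ae (ae_of_all _ fun θ => ?_)
      show l1 (L θ) = _
      rw [l1]
      exact integral_congr_ae (ae_of_all _ fun ω => abs_of_nonneg (hLnn _ _))
    rw [h1, h2, MeasureTheory.integral_integral_swap hintL]
  have hvol' : ∀ᵐ θ ∂P,
      dice (L θ) s = 2 * (∫ ω, s ω * L θ ω ∂(lam n)) / (l1 s + l1 m) := by
    filter_upwards [hvol] with θ hθ
    rw [dice, hθ, hlm]
  rw [integral_congr_ae hvol']
  have hpull : (∫ θ, 2 * (∫ ω, s ω * L θ ω ∂(lam n)) / (l1 s + l1 m) ∂P)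
      = 2 * (∫ θ, ∫ ω, s ω * L θ ω ∂(lam n) ∂P) / (l1 s + l1 m) := by
    rw [integral_div, integral_const_mul]
  rw [hpull, MeasureTheory.integral_integral_swap hint]
  have hinner : (∫ ω, ∫ θ, s ω * L θ ω ∂P ∂(lam n)) = ∫ ω, s ω * m ω ∂(lam n) := by
    refine integral_congr_ae (ae_of_all _ fun ω => ?_)
    show (∫ θ, s ω * L θ ω ∂P) = s ω * m ω
    rw [integral_const_mul, hmarg ω]
  rw [hinner, dice]
end
end
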